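/- arXiv:math/0503703 — 6 statements merged into one kernel-verified Lean document; each statement's English description precedes it below -/
import Mathlib

section
/- Let M be a free module of finite rank over a commutative ring R, F : M → M an R-linear endomorphism, M' ⊆ M a direct summand (free submodule with free quotient) such that F(M') ⊆ q·M for some q ∈ R, and g : M → M an R-linear endomorphism with g(M') ⊆ M' inducing the identity on M/M'. Then Tr(g ∘ F) ≡ Tr(F) mod (q). -/
theorem trace_comp_congr_of_filtration {R : Type*} [CommRing R] (q : R)
    (M : Type*) [AddCommGroup M] [Module R M] [Module.Free R M] [Module.Finite R M]
    (M' : Submodule R M) [Module.Free R M'] [Module.Free R (M ⧸ M')]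
    (hcompl : ∃ N : Submodule R M, IsCompl M' N)
    (F g : M →ₗ[R] M)
    (hF : ∀ x ∈ M', ∃ y : M, F x = q • y)
    (hg : ∀ x ∈ M', g x ∈ M')
    (hgid : ∀ x : M, Submodule.Quotient.mk (p := M') (g x) = Submodule.Quotient.mk x) :
    LinearMap.trace R M (g ∘ₗ F) - LinearMap.trace R M F ∈ Ideal.span {q} := by
  -- g - 1 maps M into M'
  have hmem : ∀ x : M, (g - (LinearMap.id : M →ₗ[R] M)) x ∈ M' := by
    intro x
    have := hgid x
    rw [← sub_eq_zero, ← Submodule.Quotient.mk_sub, Submodule.Quotient.mk_eq_zero] at this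
    simpa using this
  set p : M →ₗ[R] M' := LinearMap.codRestrict M' (g - LinearMap.id) hmem with hp
  -- a linear map h with F ∘ subtype = q • h
  let b := Module.Free.chooseBasis R M'
  let h : M' →ₗ[R] M := b.constr R (fun i => (hF (b i) (b i).2).choose)
  have hFh : F ∘ₗ M'.subtype = q • h := by
    apply b.ext
    intro i
    simp only [LinearMap.comp_apply, Submodule.subtype_apply, LinearMap.smul_apply]
    rw [(hF (b i) (b i).2).choose_spec]
    congr 1
    simp [h, Module.Basis.constr_basis]
  have key : F ∘ₗ (g - LinearMap.id) = q • (h ∘ₗ p) := by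
    have : (g - LinearMap.id : M →ₗ[R] M) = M'.subtype ∘ₗ p := by
      ext x; simp [p]
    rw [this, ← LinearMap.comp_assoc, hFh]
    ext x; simp
  have htr : LinearMap.trace R M (g ∘ₗ F) - LinearMap.trace R M F
      = q * LinearMap.trace R M (h ∘ₗ p) := by
    have h1 : LinearMap.trace R M ((g - LinearMap.id) * F)
        = LinearMap.trace R M (F * (g - LinearMap.id)) := LinearMap.trace_mul_comm R _ _
    have h2 : (g - LinearMap.id) * F = g ∘ₗ F - F := by
      ext x; simp [Module.End.mul_apply]
    rw [h2] at h1
    rw [← map_sub, h1]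
    show LinearMap.trace R M (F ∘ₗ (g - LinearMap.id)) = _
    rw [key, map_smul, smul_eq_mul]
  rw [htr, Ideal.mem_span_singleton]
  exact Dvd.intro _ rfl
end

section
/- Let (a_k) be a sequence of p-adic integers (elements of the ring of integers of an algebraic closure of Q_p, or of Z_p) of the form a_k = Σ_{i=1}^m n_i α_i^k for distinct nonzero α_i and nonzero integers n_i. If there exist a real constant c ≥ 0 and q = p^f such that v_q(a_k) ≥ k − c for all k ≥ c (where v_q is the q-adic valuation), then v_q(α_i) ≥ 1 for every i, and consequently v_q(a_k) ≥ k for all k ≥ 1. -/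
/-!
For `P = ∏_{j ≠ i} (X - α_j) = ∑ p_r X^r`, the combination `∑ p_r a_{k+r}` kills every geometric
term except the `i`-th one and equals `n_i P(α_i) α_i^k` with `n_i P(α_i) ≠ 0`. A lower bound
`v(a_k) ≥ k - C` survives shifts and `K`-linear combinations (with a worse `C`), so
`k v(α_i) ≥ k - C'` for all large `k`, which forces `v(α_i) ≥ 1`. The bound `v(a_k) ≥ k` then
follows from the ultrametric inequality, integers having nonnegative valuation.
-/

open Filter Polynomial

lemma Polynomial.sum_coeff_mul_powerSum_add {R ι : Type*} [CommRing R] [Fintype ι] (P : R[X])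
    (w α : ι → R) (k : ℕ) :
    ∑ r ∈ Finset.range (P.natDegree + 1), P.coeff r * ∑ j, w j * α j ^ (k + r) =
      ∑ j, w j * P.eval (α j) * α j ^ k := by
  simp only [Finset.mul_sum, eval_eq_sum_range, Finset.sum_mul]
  rw [Finset.sum_comm]
  exact Finset.sum_congr rfl fun j _ => Finset.sum_congr rfl fun r _ => by ring

namespace AddValuation

lemma map_intCast_nonneg {R Γ₀ : Type*} [Ring R] [LinearOrderedAddCommMonoidWithTop Γ₀]
    (v : AddValuation R Γ₀) (z : ℤ) : 0 ≤ v (z : R) := by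
  induction z using Int.induction_on with
  | zero => simp
  | succ z ih => simpa using le_trans (le_min ih v.map_one.ge) (v.map_add _ _)
  | pred z ih => simpa using le_trans (le_min ih v.map_one.ge) (v.map_sub _ _)

variable {K : Type*} [Field K] (v : AddValuation K (WithTop ℝ))

/-- Sequences with `v (b k) ≥ k - C` for all large `k`, i.e. `b k = O(q⁻ᵏ)` where `v q = 1`. -/
def decaySubmodule : Submodule K (ℕ → K) where
  carrier := {b | ∃ C : ℝ, ∀ᶠ k : ℕ in atTop, (((k : ℝ) - C : ℝ) : WithTop ℝ) ≤ v (b k)}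
  zero_mem' := ⟨0, Eventually.of_forall fun k => by simp⟩
  add_mem' := by
    rintro b b' ⟨C, hC⟩ ⟨C', hC'⟩
    refine ⟨max C C', (hC.and hC').mono fun k ⟨hk, hk'⟩ => ?_⟩
    refine le_trans (le_min ?_ ?_) (v.map_add _ _)
    · exact le_trans (WithTop.coe_le_coe.mpr (by linarith [le_max_left C C'])) hk
    · exact le_trans (WithTop.coe_le_coe.mpr (by linarith [le_max_right C C'])) hk'
  smul_mem' := by
    rintro x b ⟨C, hC⟩
    rcases eq_or_ne x 0 with rfl | hx
    · exact ⟨0, Eventually.of_forall fun k => by simp⟩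
    obtain ⟨r, hr⟩ := WithTop.ne_top_iff_exists.mp (v.ne_top_iff.mpr hx)
    refine ⟨C - r, hC.mono fun k hk => ?_⟩
    rw [Pi.smul_apply, smul_eq_mul, v.map_mul, ← hr]
    calc (((k : ℝ) - (C - r) : ℝ) : WithTop ℝ)
        = (r : WithTop ℝ) + (((k : ℝ) - C : ℝ) : WithTop ℝ) := by rw [← WithTop.coe_add]; ring_nf
      _ ≤ _ := add_le_add_right hk _

variable {v}

lemma shift_mem_decaySubmodule {b : ℕ → K} (hb : b ∈ v.decaySubmodule) (r : ℕ) :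
    (fun k => b (k + r)) ∈ v.decaySubmodule := by
  obtain ⟨C, hC⟩ := hb
  refine ⟨C, (tendsto_add_atTop_nat r).eventually hC |>.mono fun k hk => le_trans ?_ hk⟩
  exact WithTop.coe_le_coe.mpr (by push_cast; linarith [(r.cast_nonneg : (0 : ℝ) ≤ r)])

lemma one_le_of_pow_mem_decaySubmodule {x : K} (hx : (fun k => x ^ k) ∈ v.decaySubmodule) :
    1 ≤ v x := by
  rcases eq_or_ne x 0 with rfl | hx0
  · simp
  obtain ⟨r, hr⟩ := WithTop.ne_top_iff_exists.mp (v.ne_top_iff.mpr hx0)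
  obtain ⟨C, hC⟩ := hx
  rw [← hr, ← WithTop.coe_one, WithTop.coe_le_coe]
  by_contra! hr1
  obtain ⟨k, hk, hkC⟩ := (hC.and (eventually_gt_atTop ⌈C / (1 - r)⌉₊)).exists
  rw [v.map_pow, ← hr, ← WithTop.coe_nsmul, WithTop.coe_le_coe, nsmul_eq_mul] at hk
  have : C / (1 - r) < k := (Nat.le_ceil _).trans_lt (by exact_mod_cast hkC)
  rw [div_lt_iff₀ (by linarith)] at this
  nlinarith

lemma one_le_of_powerSum_mem_decaySubmodule {ι : Type*} [Fintype ι] {α : ι → K}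
    (hα : Function.Injective α) {w : ι → K} {i : ι} (hw : w i ≠ 0)
    (h : (fun k => ∑ j, w j * α j ^ k) ∈ v.decaySubmodule) : 1 ≤ v (α i) := by
  classical
  set P := Lagrange.nodal (Finset.univ.erase i) α
  have hPi : P.eval (α i) ≠ 0 :=
    Lagrange.eval_nodal_not_at_node fun j hj => hα.ne (Finset.ne_of_mem_erase hj).symm
  have hPj : ∀ j ≠ i, P.eval (α j) = 0 := fun j hj =>
    Lagrange.eval_nodal_at_node (Finset.mem_erase.mpr ⟨hj, Finset.mem_univ j⟩)
  have hgeom : (fun k => (w i * P.eval (α i)) * α i ^ k) =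
      ∑ r ∈ Finset.range (P.natDegree + 1), P.coeff r • fun k => ∑ j, w j * α j ^ (k + r) := by
    ext k
    simp only [Finset.sum_apply, Pi.smul_apply, smul_eq_mul, sum_coeff_mul_powerSum_add]
    rw [Finset.sum_eq_single i (fun j _ hj => by rw [hPj j hj, mul_zero, zero_mul])
      (fun hi => absurd (Finset.mem_univ i) hi)]
  have hmem : (fun k => (w i * P.eval (α i)) * α i ^ k) ∈ v.decaySubmodule :=
    hgeom ▸ Submodule.sum_mem _ fun r _ => Submodule.smul_mem _ _ (shift_mem_decaySubmodule h r)
  refine one_le_of_pow_mem_decaySubmodule ?_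
  convert Submodule.smul_mem _ (w i * P.eval (α i))⁻¹ hmem using 1
  ext k
  rw [Pi.smul_apply, smul_eq_mul, ← mul_assoc, inv_mul_cancel₀ (mul_ne_zero hw hPi), one_mul]

end AddValuation

theorem valuation_ge_one_of_power_sum_bound_general
    {K : Type*} [Field K] [CharZero K] (v : K → WithTop ℝ)
    (hv0 : ∀ x : K, v x = ⊤ ↔ x = 0)
    (hvmul : ∀ x y : K, v (x * y) = v x + v y)
    (hvadd : ∀ x y : K, min (v x) (v y) ≤ v (x + y))
    (m : ℕ) (α : Fin m → K)
    (hαdist : Function.Injective α)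
    (n : Fin m → ℤ) (hn : ∀ i, n i ≠ 0)
    (a : ℕ → K) (ha : ∀ k : ℕ, a k = ∑ i, (n i : K) * α i ^ k)
    (c : ℝ)
    (hbound : ∀ k : ℕ, c ≤ (k : ℝ) → ((k : ℝ) - c : ℝ) ≤ v (a k)) :
    (∀ i, (1 : ℝ) ≤ v (α i)) ∧ ∀ k : ℕ, 1 ≤ k → ((k : ℝ) : WithTop ℝ) ≤ v (a k) := by
  have hv1 : v 1 = 0 := by
    obtain ⟨r, hr⟩ := WithTop.ne_top_iff_exists.mp (mt (hv0 1).mp one_ne_zero)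
    have hrr := hvmul 1 1
    rw [mul_one, ← hr, ← WithTop.coe_add, WithTop.coe_eq_coe] at hrr
    rw [← hr, ← WithTop.coe_zero, WithTop.coe_eq_coe]
    linarith
  let w := AddValuation.of v ((hv0 0).mpr rfl) hv1 hvadd hvmul
  have ha_mem : a ∈ w.decaySubmodule :=
    ⟨c, (eventually_ge_atTop ⌈c⌉₊).mono fun k hk => hbound k (Nat.ceil_le.mp hk)⟩
  have hα : ∀ i, 1 ≤ w (α i) := fun i =>
    AddValuation.one_le_of_powerSum_mem_decaySubmodule hαdist (Int.cast_ne_zero.mpr (hn i))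
      (funext ha ▸ ha_mem)
  refine ⟨hα, fun k _ => ?_⟩
  rw [ha k]
  refine w.map_le_sum fun j _ => ?_
  rw [w.map_mul, w.map_pow]
  calc ((k : ℝ) : WithTop ℝ) = 0 + k • 1 := by simp
    _ ≤ w (n j) + k • w (α j) :=
      add_le_add (w.map_intCast_nonneg _) (nsmul_le_nsmul_right (hα j) k)

theorem valuation_ge_one_of_power_sum_bound
    {K : Type*} [Field K] [CharZero K] (v : K → WithTop ℝ)
    (hv0 : ∀ x : K, v x = ⊤ ↔ x = 0)
    (hvmul : ∀ x y : K, v (x * y) = v x + v y)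
    (hvadd : ∀ x y : K, min (v x) (v y) ≤ v (x + y))
    (q : K) (hq : v q = (1 : ℝ))
    (m : ℕ) (α : Fin m → K) (hαne : ∀ i, α i ≠ 0)
    (hαdist : Function.Injective α)
    (n : Fin m → ℤ) (hn : ∀ i, n i ≠ 0)
    (a : ℕ → K) (ha : ∀ k : ℕ, a k = ∑ i, (n i : K) * α i ^ k)
    (c : ℝ) (hc : 0 ≤ c)
    (hbound : ∀ k : ℕ, c ≤ (k : ℝ) → ((k : ℝ) - c : ℝ) ≤ v (a k)) :
    (∀ i, (1 : ℝ) ≤ v (α i)) ∧ ∀ k : ℕ, 1 ≤ k → ((k : ℝ) : WithTop ℝ) ≤ v (a k) :=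
  valuation_ge_one_of_power_sum_bound_general v hv0 hvmul hvadd m α hαdist n hn a ha c hbound
end

section
/- Let g be an endomorphism of a finite-dimensional vector space V over a field K of characteristic 0 with g^m = id for some m ≥ 1, and let F be an endomorphism of V commuting with g such that every eigenvalue of F (in an algebraic closure) has q-adic valuation ≥ 1 for a fixed valuation v_q on K̄. Then every eigenvalue of g∘F has q-adic valuation ≥ 1. -/
/-- Eigenvalues are taken in an algebraic closure; we realize this by assuming the
base field `K` is algebraically closed and carries the valuation `v_q`. -/
theorem eigenvalue_comp_valuation_ge_one
    {K : Type*} [Field K] [CharZero K] [IsAlgClosed K]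
    (v : K → WithTop ℝ)
    (hv0 : ∀ x : K, v x = ⊤ ↔ x = 0)
    (hvmul : ∀ x y : K, v (x * y) = v x + v y)
    (hvadd : ∀ x y : K, min (v x) (v y) ≤ v (x + y))
    (V : Type*) [AddCommGroup V] [Module K V] [FiniteDimensional K V]
    (g F : Module.End K V) (m : ℕ) (hm : 1 ≤ m) (hgm : g ^ m = 1)
    (hcomm : g * F = F * g)
    (hF : ∀ μ : K, F.HasEigenvalue μ → (1 : ℝ) ≤ v μ) :
    ∀ lam : K, (g * F).HasEigenvalue lam → (1 : ℝ) ≤ v lam := by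
  -- v 1 = 0
  have hv1 : v 1 = 0 := by
    have h := hvmul 1 1
    rw [one_mul] at h
    cases hv : v 1 with
    | top => exact absurd ((hv0 1).mp hv) one_ne_zero
    | coe a =>
      rw [hv, ← WithTop.coe_add, WithTop.coe_eq_coe] at h
      have ha : a = 0 := by linarith
      rw [ha]
      exact_mod_cast rfl
  have hvpow : ∀ (n : ℕ) (x : K), v (x ^ n) = n • v x := by
    intro n x
    induction n with
    | zero => simpa using hv1
    | succ n ih =>
      rw [pow_succ, hvmul, ih, succ_nsmul]
  intro lam hlam
  obtain ⟨x, hx⟩ := hlam.exists_hasEigenvector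
  have hc : Commute g F := hcomm
  have hpow : (g * F) ^ m = F ^ m := by
    rw [hc.mul_pow, hgm, one_mul]
  have hnt : Nontrivial V := ⟨x, 0, hx.2⟩
  -- lam ^ m is an eigenvalue of F ^ m
  have hev : (F ^ m).HasEigenvalue (lam ^ m) := by
    refine Module.End.hasEigenvalue_of_hasEigenvector ⟨?_, hx.2⟩
    rw [Module.End.mem_eigenspace_iff, ← hpow]
    exact hx.pow_apply m
  -- spectral mapping: lam ^ m = μ ^ m for some eigenvalue μ of F
  have hspec : lam ^ m ∈ spectrum K (F ^ m) :=
    Module.End.hasEigenvalue_iff_mem_spectrum.mp hev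
  have hne : (spectrum K F).Nonempty := by
    obtain ⟨μ₀, hμ₀⟩ := Module.End.exists_eigenvalue F
    exact ⟨μ₀, Module.End.hasEigenvalue_iff_mem_spectrum.mp hμ₀⟩
  have hmap := spectrum.map_polynomial_aeval_of_nonempty F (Polynomial.X ^ m) hne
  rw [map_pow, Polynomial.aeval_X] at hmap
  rw [hmap] at hspec
  obtain ⟨μ, hμmem, hμeq⟩ := hspec
  simp only [Polynomial.eval_pow, Polynomial.eval_X] at hμeq
  have hμ1 : (1 : ℝ) ≤ v μ := hF μ (Module.End.HasEigenvalue.of_mem_spectrum hμmem)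
  -- compare valuations
  have hkey : (m : ℕ) • v μ = (m : ℕ) • v lam := by
    rw [← hvpow, ← hvpow, hμeq]
  cases hvl : v lam with
  | top => exact le_top
  | coe a =>
    rw [hvl] at hkey
    cases hvm : v μ with
    | top =>
      have hmu0 : μ = 0 := (hv0 μ).mp hvm
      have : lam = 0 := by
        have : lam ^ m = 0 := by rw [← hμeq, hmu0, zero_pow (by omega)]
        exact pow_eq_zero_iff (by omega) |>.mp this
      rw [this] at hvl
      rw [(hv0 0).mpr rfl] at hvl
      exact absurd hvl (by simp)
    | coe b =>
      rw [hvm, ← WithTop.coe_nsmul, ← WithTop.coe_nsmul, WithTop.coe_eq_coe] at hkey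
      rw [hvm, WithTop.coe_le_coe] at hμ1
      have hm' : (0 : ℝ) < m := by exact_mod_cast Nat.pos_of_ne_zero (by omega)
      have : (1 : ℝ) ≤ a := by
        simp only [nsmul_eq_mul] at hkey
        nlinarith
      exact_mod_cast this
end

section
/- Let G be a finite group acting on a finite set X, and suppose a bijection F : X → X commutes with the G-action. If there exist algebraic integers (in a fixed p-adic ring) such that |Fix(g∘F^k)| ≡ |Fix(F^k)| mod q^k for all g ∈ G and all k ≥ 1 (congruence in the p-adic ring, q a power of p), and c = v_q(|G|), then |Fix(F̄^k)| ≡ |Fix(F^k)| mod q^{k−c} for all k ≥ c, where F̄ is the induced map on X/G. -/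
/-! Twisted Burnside: `∑ g, |Fix (g ∘ P)| = |G| · |Fix P̄|`, because a point `x` contributes
the `g` with `g • P x = x`, which form a coset of its stabilizer when the orbit of `x` is
`P̄`-fixed and do not exist otherwise. Hence
`|G| (|Fix F̄^k| - |Fix F^k|) = ∑ g, (|Fix (g ∘ F^k)| - |Fix F^k|)` has valuation at least `k`,
and it remains to subtract `v |G| = c`. -/

open MulAction Finset

theorem Fintype.sum_natCard_subtype_comm {α β : Type*} [Fintype α] [Fintype β]
    (r : α → β → Prop) :
    ∑ a, Nat.card {b // r a b} = ∑ b, Nat.card {a // r a b} := by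
  classical
  simp only [Nat.card_eq_fintype_card, Fintype.card_subtype, card_filter]
  exact sum_comm

namespace MulAction

variable {G X : Type*} [Group G] [MulAction G X]

theorem card_smul_eq_eq_of_mem_orbit (x : X) {y y' : X} (h : y ∈ orbit G y') :
    Nat.card {g : G // g • y = x} = Nat.card {g : G // g • y' = x} := by
  obtain ⟨a, rfl⟩ := h
  exact Nat.card_congr <| (Equiv.mulRight a).subtypeEquiv fun g => by simp [mul_smul]

theorem card_smul_eq_eq_card_smul_out_eq (x y : X) :
    Nat.card {g : G // g • y = x} =
      Nat.card {g : G // g • (Quotient.mk (orbitRel G X) x).out = x ∧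
        Quotient.mk (orbitRel G X) y = Quotient.mk (orbitRel G X) x} := by
  by_cases hyx : Quotient.mk (orbitRel G X) y = Quotient.mk (orbitRel G X) x
  · simp only [hyx, and_true]
    refine card_smul_eq_eq_of_mem_orbit x (orbitRel_apply.mp (Quotient.exact ?_))
    rw [hyx, Quotient.out_eq]
  · have : IsEmpty {g : G // g • y = x} :=
      ⟨fun ⟨g, hg⟩ => hyx (Quotient.sound (orbitRel_apply.mpr ⟨g, hg⟩)).symm⟩
    simp [hyx]

noncomputable def smulOutTransversalEquiv (g : G) (p : Quotient (orbitRel G X) → Prop) :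
    {x : X // g • (Quotient.mk (orbitRel G X) x).out = x ∧ p (Quotient.mk (orbitRel G X) x)} ≃
      {ω : Quotient (orbitRel G X) // p ω} where
  toFun x := ⟨Quotient.mk _ x, x.2.2⟩
  invFun ω := ⟨g • ω.1.out, by
    have hω : Quotient.mk (orbitRel G X) (g • ω.1.out) = ω :=
      orbitRel.Quotient.quotient_smul_eq.trans ω.1.out_eq
    rw [hω]
    exact ⟨rfl, ω.2⟩⟩
  left_inv x := Subtype.ext x.2.1
  right_inv ω := Subtype.ext <| orbitRel.Quotient.quotient_smul_eq.trans ω.1.out_eq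

theorem card_mul_card_fixedPoints_quotient [Fintype G] [Finite X] (P : X → X)
    (Pbar : Quotient (orbitRel G X) → Quotient (orbitRel G X))
    (hP : Function.Semiconj (Quotient.mk (orbitRel G X)) P Pbar) :
    Nat.card G * Nat.card {ω // Pbar ω = ω} = ∑ g : G, Nat.card {x : X // g • P x = x} := by
  have := Fintype.ofFinite X
  calc Nat.card G * Nat.card {ω // Pbar ω = ω}
      = ∑ g : G, Nat.card {x : X // g • (Quotient.mk (orbitRel G X) x).out = x ∧
          Pbar (Quotient.mk (orbitRel G X) x) = Quotient.mk (orbitRel G X) x} := by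
        rw [sum_congr rfl fun g _ =>
            Nat.card_congr (smulOutTransversalEquiv g fun ω => Pbar ω = ω),
          sum_const, card_univ, smul_eq_mul, Nat.card_eq_fintype_card]
    _ = ∑ x : X, Nat.card {g : G // g • (Quotient.mk (orbitRel G X) x).out = x ∧
          Pbar (Quotient.mk (orbitRel G X) x) = Quotient.mk (orbitRel G X) x} :=
        Fintype.sum_natCard_subtype_comm _
    _ = ∑ x : X, Nat.card {g : G // g • P x = x} := by
        simp only [← hP _, card_smul_eq_eq_card_smul_out_eq]
    _ = ∑ g : G, Nat.card {x : X // g • P x = x} := Fintype.sum_natCard_subtype_comm _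

end MulAction

theorem map_one_eq_zero_of_map_mul {R : Type*} [MulOneClass R] {v : R → WithTop ℝ}
    (hv1 : v 1 ≠ ⊤) (hvmul : ∀ x y : R, v (x * y) = v x + v y) : v 1 = 0 := by
  obtain ⟨r, hr⟩ := WithTop.ne_top_iff_exists.mp hv1
  have h := hvmul 1 1
  rw [one_mul, ← hr] at h
  norm_cast at h
  rw [← hr, show r = 0 by linarith, WithTop.coe_zero]

theorem AddValuation.map_natCast_nonneg {R Γ₀ : Type*} [Ring R]
    [LinearOrderedAddCommMonoidWithTop Γ₀]
    (v : AddValuation R Γ₀) (n : ℕ) : 0 ≤ v n := by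
  induction n with
  | zero => simp
  | succ n ih => exact (le_min ih v.map_one.ge).trans (by simpa using v.map_add n 1)

theorem WithTop.coe_sub_le_of_le_coe_add {a b : ℝ} {t : WithTop ℝ}
    (h : (a : WithTop ℝ) ≤ b + t) :
    ((a - b : ℝ) : WithTop ℝ) ≤ t := by
  induction t using WithTop.recTopCoe with
  | top => exact le_top
  | coe r =>
    norm_cast at h ⊢
    linarith

theorem quotient_fixed_points_congr_general
    {K : Type*} [Field K] (v : K → WithTop ℝ)
    (hv0 : ∀ x : K, v x = ⊤ ↔ x = 0)
    (hvmul : ∀ x y : K, v (x * y) = v x + v y)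
    (hvadd : ∀ x y : K, min (v x) (v y) ≤ v (x + y))
    {G : Type*} [Group G] [Fintype G] {X : Type*} [Finite X] [MulAction G X]
    (F : Equiv.Perm X)
    (Fbar : Quotient (MulAction.orbitRel G X) → Quotient (MulAction.orbitRel G X))
    (hFbar : ∀ x : X, Fbar (Quotient.mk (MulAction.orbitRel G X) x)
      = Quotient.mk (MulAction.orbitRel G X) (F x))
    (c : ℝ) (hc : (c : WithTop ℝ) = v ((Nat.card G : K)))
    (hcong : ∀ (g : G) (k : ℕ), 1 ≤ k →
      ((k : ℝ) : WithTop ℝ) ≤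
        v ((Nat.card {x : X // g • (F ^ k) x = x} : K)
            - (Nat.card {x : X // (F ^ k) x = x} : K))) :
    ∀ k : ℕ, c ≤ (k : ℝ) →
      (((k : ℝ) - c : ℝ) : WithTop ℝ) ≤
        v ((Nat.card {ω : Quotient (MulAction.orbitRel G X) // Fbar^[k] ω = ω} : K)
            - (Nat.card {x : X // (F ^ k) x = x} : K)) := by
  let w : AddValuation K (WithTop ℝ) := .of v ((hv0 0).mpr rfl)
    (map_one_eq_zero_of_map_mul (fun h => one_ne_zero ((hv0 1).mp h)) hvmul) hvadd hvmul
  intro k _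
  set B : K := (Nat.card {x : X // (F ^ k) x = x} : K)
  have hFbar_pow : Function.Semiconj (Quotient.mk _) (F ^ k) Fbar^[k] :=
    Function.Semiconj.iterate_right (fun x => (hFbar x).symm) k
  have hsum : (Nat.card G : K) * ((Nat.card {ω // Fbar^[k] ω = ω} : K) - B) =
      ∑ g : G, ((Nat.card {x : X // g • (F ^ k) x = x} : K) - B) := by
    rw [mul_sub, ← Nat.cast_mul, card_mul_card_fixedPoints_quotient (F ^ k) Fbar^[k] hFbar_pow,
      Nat.cast_sum, sum_sub_distrib, sum_const, card_univ, nsmul_eq_mul, Nat.card_eq_fintype_card]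
  have hterm (g : G) :
      ((k : ℝ) : WithTop ℝ) ≤ w ((Nat.card {x : X // g • (F ^ k) x = x} : K) - B) := by
    rcases k.eq_zero_or_pos with rfl | hk
    · simpa using
        (le_min (w.map_natCast_nonneg _) (w.map_natCast_nonneg _)).trans (w.map_sub _ _)
    · exact hcong g k hk
  have hval :
      ((k : ℝ) : WithTop ℝ) ≤ c + v ((Nat.card {ω // Fbar^[k] ω = ω} : K) - B) := by
    rw [hc, ← hvmul, hsum]
    exact w.map_le_sum fun g _ => hterm g
  exact WithTop.coe_sub_le_of_le_coe_add hval

theorem quotient_fixed_points_congr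
    {K : Type*} [Field K] [CharZero K] (v : K → WithTop ℝ)
    (hv0 : ∀ x : K, v x = ⊤ ↔ x = 0)
    (hvmul : ∀ x y : K, v (x * y) = v x + v y)
    (hvadd : ∀ x y : K, min (v x) (v y) ≤ v (x + y))
    (q : K) (hq : v q = (1 : ℝ))
    {G : Type*} [Group G] [Fintype G] {X : Type*} [Finite X] [MulAction G X]
    (F : Equiv.Perm X) (hF : ∀ (g : G) (x : X), F (g • x) = g • F x)
    (Fbar : Quotient (MulAction.orbitRel G X) → Quotient (MulAction.orbitRel G X))
    (hFbar : ∀ x : X, Fbar (Quotient.mk (MulAction.orbitRel G X) x)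
      = Quotient.mk (MulAction.orbitRel G X) (F x))
    (c : ℝ) (hc : (c : WithTop ℝ) = v ((Nat.card G : K)))
    (hcong : ∀ (g : G) (k : ℕ), 1 ≤ k →
      ((k : ℝ) : WithTop ℝ) ≤
        v ((Nat.card {x : X // g • (F ^ k) x = x} : K)
            - (Nat.card {x : X // (F ^ k) x = x} : K))) :
    ∀ k : ℕ, c ≤ (k : ℝ) →
      (((k : ℝ) - c : ℝ) : WithTop ℝ) ≤
        v ((Nat.card {ω : Quotient (MulAction.orbitRel G X) // Fbar^[k] ω = ω} : K)
            - (Nat.card {x : X // (F ^ k) x = x} : K)) :=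
  quotient_fixed_points_congr_general v hv0 hvmul hvadd F Fbar hFbar c hc hcong
end

section
/- Suppose two sequences of natural numbers (a_k) and (b_k) satisfy: (1) there are finitely many nonzero integers n_i and distinct nonzero algebraic numbers α_i with a_k − b_k = Σ_i n_i α_i^k for all k ≥ 1; (2) for some constant c ≥ 0 and prime power q, a_k ≡ b_k mod q^{⌈k−c⌉} (as p-adic integers, for any embedding into C_p) for all k ≥ c. Then a_k ≡ b_k mod q^k for all k ≥ 1. -/
/-!
Inverting the Vandermonde matrix of the distinct `α i` writes each term `n i * α i ^ k` as a
linear combination, with coefficients independent of `k`, of the differences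
`a (k + j) - b (k + j)` for `j < m`; hence `v (n i * α i ^ k) ≥ k - O(1)`. As
`v (n i * α i ^ k) = v (n i) + k • v (α i)`, this forces `v (α i) ≥ 1` whenever `n i ≠ 0`, and then
`v (a k - b k) ≥ min_i v (n i * α i ^ k) ≥ k` for every `k ≥ 1`.
-/

open Filter Finset

theorem le_of_eventually_natCast_mul_add_le {s t A B : ℝ}
    (h : ∀ᶠ k : ℕ in atTop, k * s + A ≤ k * t + B) : s ≤ t := by
  by_contra! hts
  have hgrow : Tendsto (fun k : ℕ => (k : ℝ) * (s - t)) atTop atTop :=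
    tendsto_natCast_atTop_atTop.atTop_mul_const (sub_pos.mpr hts)
  obtain ⟨k, hk, hbig⟩ := (h.and (hgrow.eventually_gt_atTop (B - A))).exists
  nlinarith

namespace Matrix

theorem exists_mul_pow_eq_sum_mul_sum_pow_add {K : Type*} [Field K] {m : ℕ} {α : Fin m → K}
    (hα : Function.Injective α) :
    ∃ C : Matrix (Fin m) (Fin m) K, ∀ (w : Fin m → K) (k : ℕ) (i : Fin m),
      w i * α i ^ k = ∑ j, C i j * ∑ l, w l * α l ^ (k + j) := by
  set V := (vandermonde α)ᵀ
  have hV : IsUnit V.det := by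
    rw [det_transpose, isUnit_iff_ne_zero]
    exact det_vandermonde_ne_zero_iff.mpr hα
  refine ⟨V⁻¹, fun w k i => ?_⟩
  set x : Fin m → K := fun l => w l * α l ^ k
  have hVx : V *ᵥ x = fun j : Fin m => ∑ l, w l * α l ^ (k + j) := by
    ext j
    simp only [V, x, mulVec, dotProduct, transpose_apply, vandermonde_apply, pow_add]
    exact sum_congr rfl fun l _ => by ring
  calc w i * α i ^ k = (V⁻¹ *ᵥ (V *ᵥ x)) i := by
        rw [mulVec_mulVec, nonsing_inv_mul _ hV, one_mulVec]
    _ = _ := by rw [hVx]; rfl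

end Matrix

namespace AddValuation

variable {K : Type*} [Field K] (v : AddValuation K (WithTop ℝ))

theorem exists_eventually_le_map_mul_pow {m : ℕ} {α : Fin m → K} (hα : Function.Injective α)
    (w : Fin m → K) {c : ℝ}
    (h : ∀ᶠ k : ℕ in atTop, (((k : ℝ) - c : ℝ) : WithTop ℝ) ≤ v (∑ l, w l * α l ^ k))
    (i : Fin m) :
    ∃ D : ℝ, ∀ᶠ k : ℕ in atTop, (((k : ℝ) + D : ℝ) : WithTop ℝ) ≤ v (w i * α i ^ k) := by
  obtain ⟨C, hC⟩ := Matrix.exists_mul_pow_eq_sum_mul_sum_pow_add hα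
  obtain ⟨M, hM⟩ := Finite.exists_ge fun j => v (C i j)
  obtain ⟨D, hD⟩ : ∃ D : ℝ, (D : WithTop ℝ) ≤ M := by
    cases M with
    | top => exact ⟨0, le_top⟩
    | coe r => exact ⟨r, le_rfl⟩
  have hshift : ∀ᶠ k : ℕ in atTop, ∀ j : Fin m,
      (((k : ℝ) - c : ℝ) : WithTop ℝ) ≤ v (∑ l, w l * α l ^ (k + j)) := by
    refine eventually_all.mpr fun j => ?_
    filter_upwards [tendsto_add_atTop_nat (j : ℕ) |>.eventually h] with k hk
    refine le_trans ?_ hk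
    exact WithTop.coe_le_coe.mpr (by push_cast; linarith [(j : ℕ).cast_nonneg (α := ℝ)])
  refine ⟨D - c, ?_⟩
  filter_upwards [hshift] with k hk
  rw [hC w k i]
  refine v.map_le_sum fun j _ => ?_
  rw [v.map_mul, show k + (D - c) = D + (k - c) by ring, WithTop.coe_add]
  exact add_le_add (hD.trans (hM j)) (hk j)

theorem coe_le_map_mul_pow_of_eventually {w a : K} (hw : 0 ≤ v w) {D : ℝ}
    (h : ∀ᶠ k : ℕ in atTop, (((k : ℝ) + D : ℝ) : WithTop ℝ) ≤ v (w * a ^ k)) (k : ℕ) :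
    ((k : ℝ) : WithTop ℝ) ≤ v (w * a ^ k) := by
  simp only [v.map_mul, v.map_pow] at h ⊢
  cases hN : v w with
  | top => simp
  | coe N =>
    have ha : 1 ≤ v a := by
      cases ht : v a with
      | top => exact le_top
      | coe t =>
        simp only [hN, ht, ← WithTop.coe_nsmul, ← WithTop.coe_add, WithTop.coe_le_coe,
          nsmul_eq_mul] at h
        exact_mod_cast le_of_eventually_natCast_mul_add_le (s := 1) (by simpa [add_comm] using h)
    calc ((k : ℝ) : WithTop ℝ) = k • 1 := by simp
      _ ≤ k • v a := nsmul_le_nsmul_right ha k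
      _ ≤ N + k • v a := le_add_of_nonneg_left (hN ▸ hw)

end AddValuation

/-- `K` plays the role of `ℂ_p` (with a fixed embedding of the field generated by the `α i`)
and `v` that of the `q`-adic valuation. -/
theorem mirror_congruence_improvement_general
    {K : Type*} [Field K] (v : K → WithTop ℝ)
    (hv0 : ∀ x : K, v x = ⊤ ↔ x = 0)
    (hvmul : ∀ x y : K, v (x * y) = v x + v y)
    (hvadd : ∀ x y : K, min (v x) (v y) ≤ v (x + y))
    (q : ℕ)
    (hv_int : ∀ (z : ℤ) (j : ℕ), ((j : ℝ) : WithTop ℝ) ≤ v ((z : K)) ↔ (q : ℤ) ^ j ∣ z)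
    (a b : ℕ → ℕ)
    (m : ℕ) (α : Fin m → K) (hαdist : Function.Injective α)
    (n : Fin m → ℤ)
    (hab : ∀ k : ℕ, 1 ≤ k → (a k : K) - (b k : K) = ∑ i, (n i : K) * α i ^ k)
    (c : ℝ)
    (hcong : ∀ k : ℕ, c ≤ (k : ℝ) → (((k : ℝ) - c : ℝ) : WithTop ℝ) ≤ v ((a k : K) - (b k : K))) :
    ∀ k : ℕ, 1 ≤ k → (q : ℤ) ^ k ∣ ((a k : ℤ) - (b k : ℤ)) := by
  have hv1 : v 1 = 0 := by
    obtain ⟨r, hr⟩ := WithTop.ne_top_iff_exists.mp (mt (hv0 1).mp one_ne_zero)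
    have h := hvmul 1 1
    rw [one_mul] at h
    rw [← hr] at h ⊢
    norm_cast at h ⊢
    linarith
  let V := AddValuation.of v ((hv0 0).mpr rfl) hv1 hvadd hvmul
  have hVint : ∀ z : ℤ, 0 ≤ V z := fun z => by simpa [V] using (hv_int z 0).mpr (by simp)
  have hsum : ∀ᶠ k : ℕ in atTop,
      (((k : ℝ) - c : ℝ) : WithTop ℝ) ≤ V (∑ i, (n i : K) * α i ^ k) := by
    filter_upwards [eventually_ge_atTop 1, eventually_ge_atTop ⌈c⌉₊] with k hk hkc
    rw [AddValuation.of_apply, ← hab k hk]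
    exact hcong k (Nat.ceil_le.mp hkc)
  intro k hk
  rw [← hv_int, show ((a k - b k : ℤ) : K) = a k - b k by push_cast; ring, hab k hk]
  refine V.map_le_sum fun i _ => ?_
  obtain ⟨D, hD⟩ := V.exists_eventually_le_map_mul_pow hαdist _ hsum i
  exact V.coe_le_map_mul_pow_of_eventually (hVint (n i)) hD k

/-- `K` plays the role of `ℂ_p` (with a fixed embedding of the field generated by the
`α i`), equipped with the additive valuation `v = v_q` normalized by `v q = 1`.
The hypothesis `hv_int` expresses that `v` restricts to the `q`-adic valuation on `ℤ`. -/
theorem mirror_congruence_improvement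
    {K : Type*} [Field K] [CharZero K] (v : K → WithTop ℝ)
    (hv0 : ∀ x : K, v x = ⊤ ↔ x = 0)
    (hvmul : ∀ x y : K, v (x * y) = v x + v y)
    (hvadd : ∀ x y : K, min (v x) (v y) ≤ v (x + y))
    (p : ℕ) (hp : p.Prime) (f : ℕ) (hf : 1 ≤ f) (q : ℕ) (hqpf : q = p ^ f)
    (hq : v (q : K) = (1 : ℝ))
    (hv_int : ∀ (z : ℤ) (j : ℕ), ((j : ℝ) : WithTop ℝ) ≤ v ((z : K)) ↔ (q : ℤ) ^ j ∣ z)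
    (a b : ℕ → ℕ)
    (m : ℕ) (α : Fin m → K) (hαne : ∀ i, α i ≠ 0) (hαdist : Function.Injective α)
    (n : Fin m → ℤ) (hn : ∀ i, n i ≠ 0)
    (hab : ∀ k : ℕ, 1 ≤ k → (a k : K) - (b k : K) = ∑ i, (n i : K) * α i ^ k)
    (c : ℝ) (hc : 0 ≤ c)
    (hcong : ∀ k : ℕ, c ≤ (k : ℝ) → (((k : ℝ) - c : ℝ) : WithTop ℝ) ≤ v ((a k : K) - (b k : K))) :
    ∀ k : ℕ, 1 ≤ k → (q : ℤ) ^ k ∣ ((a k : ℤ) - (b k : ℤ)) :=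
  mirror_congruence_improvement_general v hv0 hvmul hvadd q hv_int a b m α hαdist n hab c hcong
end

section
/- Let (a_k)_{k≥1} be a sequence of integers such that the formal power series Σ_{k≥1} a_k T^{k−1} equals Σ_{i=1}^m n_i α_i/(1 − α_i T) for distinct nonzero algebraic numbers α_i and nonzero integers n_i, let q be a prime power, and suppose that q^k divides a_k for all k ≥ K, i.e. v_q(a_k) ≥ k for all k ≥ K under every p-adic valuation v_q; then v_q(α_i) ≥ 1 for each i under every such valuation. -/
/-- `K` carries the `q`-adic additive valuation `v` (normalized by `v q = 1`) for
`q = p ^ f`. The power-series identity `Σ a_k T^{k-1} = Σ_i n_i α_i/(1-α_i T)` is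
expressed coefficientwise: `a_k = Σ_i n_i α_i ^ k`. -/
theorem poles_valuation_ge_one_of_coeff_divisibility
    {K : Type*} [Field K] [CharZero K] (v : K → WithTop ℝ)
    (hv0 : ∀ x : K, v x = ⊤ ↔ x = 0)
    (hvmul : ∀ x y : K, v (x * y) = v x + v y)
    (hvadd : ∀ x y : K, min (v x) (v y) ≤ v (x + y))
    (p : ℕ) (hp : p.Prime) (f : ℕ) (hf : 1 ≤ f) (q : ℕ) (hqpf : q = p ^ f)
    (hq : v (q : K) = (1 : ℝ))
    (m : ℕ) (α : Fin m → K) (hαne : ∀ i, α i ≠ 0) (hαdist : Function.Injective α)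
    (n : Fin m → ℤ) (hn : ∀ i, n i ≠ 0)
    (a : ℕ → ℤ)
    (ha : ∀ k : ℕ, 1 ≤ k → (a k : K) = ∑ i, (n i : K) * α i ^ k)
    (K₀ : ℕ) (hdiv : ∀ k : ℕ, K₀ ≤ k → ((k : ℝ) : WithTop ℝ) ≤ v ((a k : K))) :
    ∀ i, (1 : ℝ) ≤ v (α i) := by
  classical
  intro i
  -- nonzero elements have real valuation
  have hv_real : ∀ x : K, x ≠ 0 → ∃ r : ℝ, v x = (r : WithTop ℝ) := by
    intro x hx
    cases h : v x with
    | top => exact absurd ((hv0 x).1 h) hx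
    | coe r => exact ⟨r, rfl⟩
  have hvzero : v (0 : K) = ⊤ := (hv0 0).2 rfl
  have hv1 : v (1 : K) = ((0 : ℝ) : WithTop ℝ) := by
    obtain ⟨r, hr⟩ := hv_real 1 one_ne_zero
    have := hvmul 1 1
    rw [mul_one, hr, ← WithTop.coe_add] at this
    have : r = r + r := WithTop.coe_injective this
    have : r = 0 := by linarith
    rw [hr, this]
  have hvpow : ∀ (x : K) (r : ℝ), v x = (r : WithTop ℝ) →
      ∀ k : ℕ, v (x ^ k) = (((k : ℝ) * r : ℝ) : WithTop ℝ) := by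
    intro x r hx k
    induction k with
    | zero => simpa using hv1
    | succ k ih =>
        rw [pow_succ, hvmul, ih, hx, ← WithTop.coe_add]
        congr 1
        push_cast
        ring
  -- lower bound for valuation of finite sums
  have hvsum : ∀ (s : Finset (Fin m)) (g : Fin m → K) (B : WithTop ℝ),
      (∀ j ∈ s, B ≤ v (g j)) → B ≤ v (∑ j ∈ s, g j) := by
    intro s g B
    induction s using Finset.cons_induction with
    | empty => intro _; simp [hvzero]
    | cons a s has ih =>
        intro h
        rw [Finset.sum_cons]
        refine le_trans (le_min (h a (Finset.mem_cons_self a s))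
          (ih fun j hj => h j (Finset.mem_cons_of_mem hj))) (hvadd _ _)
  -- the Vandermonde matrix
  set M : Matrix (Fin m) (Fin m) K := Matrix.transpose (Matrix.vandermonde α) with hMdef
  have hdet : M.det ≠ 0 := by
    rw [Matrix.det_transpose, Matrix.det_vandermonde]
    refine Finset.prod_ne_zero_iff.mpr fun i' _ => Finset.prod_ne_zero_iff.mpr fun j' hj' => ?_
    have : i' < j' := Finset.mem_Ioi.mp hj'
    exact sub_ne_zero.mpr fun h => (ne_of_gt this) (hαdist h)
  have hM : IsUnit M.det := isUnit_iff_ne_zero.mpr hdet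
  -- a uniform lower bound on row i of M⁻¹
  have hC' : ∀ j : Fin m, ∃ c : ℝ, (c : WithTop ℝ) ≤ v (M⁻¹ i j) := by
    intro j
    cases h : v (M⁻¹ i j) with
    | top => exact ⟨0, by simp [h]⟩
    | coe r => exact ⟨r, le_refl _⟩
  choose c hc using hC'
  obtain ⟨C, hC⟩ : ∃ C : ℝ, ∀ j : Fin m, (C : WithTop ℝ) ≤ v (M⁻¹ i j) := by
    refine ⟨Finset.univ.inf' ⟨i, Finset.mem_univ i⟩ c, fun j => le_trans ?_ (hc j)⟩
    exact_mod_cast Finset.inf'_le c (Finset.mem_univ j)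
  obtain ⟨r, hr⟩ := hv_real (α i) (hαne i)
  obtain ⟨s, hs⟩ := hv_real ((n i : K)) (Int.cast_ne_zero.mpr (hn i))
  -- the key inequality for each large k
  have key : ∀ k : ℕ, K₀ ≤ k → 1 ≤ k → C + (k : ℝ) ≤ s + (k : ℝ) * r := by
    intro k hk0 hk1
    have hx : M.mulVec (fun i' => (n i' : K) * α i' ^ k) = fun j : Fin m => ((a (k + (j:ℕ)) : K)) := by
      funext j
      rw [ha (k + j) (le_trans hk1 (Nat.le_add_right k j))]
      simp only [Matrix.mulVec, dotProduct, hMdef, Matrix.transpose_apply,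
        Matrix.vandermonde_apply, pow_add]
      exact Finset.sum_congr rfl fun i' _ => by ring
    have hxeq : (fun i' => (n i' : K) * α i' ^ k)
        = M⁻¹.mulVec (fun j : Fin m => ((a (k + (j:ℕ)) : K))) := by
      rw [← hx, Matrix.mulVec_mulVec, Matrix.nonsing_inv_mul M hM, Matrix.one_mulVec]
    have hb : ((C + (k : ℝ) : ℝ) : WithTop ℝ) ≤ v ((n i : K) * α i ^ k) := by
      have hi := congrFun hxeq i
      rw [hi]
      show _ ≤ v (∑ j, M⁻¹ i j * ((a (k + (j:ℕ)) : K)))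
      refine hvsum Finset.univ _ _ fun j _ => ?_
      rw [hvmul, WithTop.coe_add]
      refine add_le_add (hC j) ?_
      refine le_trans ?_ (hdiv (k + j) (le_trans hk0 (Nat.le_add_right k j)))
      exact_mod_cast Nat.cast_le.mpr (Nat.le_add_right k j)
    rw [hvmul, hs, hvpow (α i) r hr k, ← WithTop.coe_add] at hb
    exact_mod_cast hb
  -- conclude r ≥ 1
  rw [hr]
  rw [WithTop.coe_le_coe]
  by_contra hlt
  push_neg at hlt
  obtain ⟨k', hk'⟩ := exists_nat_gt (max (max (K₀ : ℝ) 1) ((s - C) / (1 - r)))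
  have hkR : ((K₀:ℝ) ⊔ 1) ≤ (k' : ℝ) := le_trans (le_max_left _ _) hk'.le
  have hk0 : K₀ ≤ k' := by exact_mod_cast le_trans (le_max_left (K₀:ℝ) 1) hkR
  have hk1 : 1 ≤ k' := by exact_mod_cast le_trans (le_max_right (K₀:ℝ) 1) hkR
  have h2 := key k' hk0 hk1
  have h3 : (s - C) / (1 - r) < (k' : ℝ) :=
    lt_of_le_of_lt (le_max_right _ _) hk'
  have h4 : 0 < 1 - r := by linarith
  rw [div_lt_iff₀ h4] at h3
  nlinarith
end
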